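/- arXiv:1111.5398 — 2 statements merged into one kernel-verified Lean document; each statement's English description precedes it below -/
import Mathlib

section
/- Let M be a finite set indexing the components of a connected fiber, and let (E_i · E_j) be a symmetric rational matrix such that E_i·E_j ≥ 0 for i ≠ j, Σ_j m_j (E_i·E_j) = 0 for all i for some positive rationals m_j (the multiplicities of the fiber), and the 'dual graph' is connected (for any partition of M into nonempty sets S, T there exist i ∈ S, j ∈ T with E_i·E_j > 0). Then for any rational vector (a_i), the quadratic form Σ_{i,j} a_i a_j (E_i·E_j) ≤ 0, with equality if and only if (a_i) is proportional to (m_i). -/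
/-! Write `aᵢ = cᵢ mᵢ`. Since `m` lies in the kernel of the symmetric matrix `Q`,
`Σ aᵢ aⱼ Qᵢⱼ = -½ Σ mᵢ mⱼ Qᵢⱼ (cᵢ - cⱼ)²`, and the right-hand sum has nonnegative terms
(the diagonal ones vanish). It is zero exactly when `c` is constant along every edge
`Qᵢⱼ > 0` of the dual graph, i.e. by connectedness when `c` is constant. -/

open Finset

section

variable {M : Type*}

def dirichletEnergy [Fintype M] {K : Type*} [CommRing K] (w : M → M → K) (c : M → K) : K :=
  ∑ i, ∑ j, w i j * (c i - c j) ^ 2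

theorem two_mul_sum_mul_mul_eq_neg_dirichletEnergy [Fintype M] {R : Type*} [CommRing R]
    {Q : M → M → R} (hsym : ∀ i j, Q i j = Q j i) {m : M → R}
    (hker : ∀ i, ∑ j, m j * Q i j = 0) (c : M → R) :
    2 * ∑ i, ∑ j, c i * m i * (c j * m j) * Q i j =
      -dirichletEnergy (fun i j => m i * m j * Q i j) c := by
  have hrow : ∑ i, ∑ j, m i * m j * Q i j * c i ^ 2 = 0 :=
    sum_eq_zero fun i _ => by
      rw [← mul_zero (m i * c i ^ 2), ← hker i, mul_sum]
      exact sum_congr rfl fun j _ => by ring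
  have hcol : ∑ i, ∑ j, m i * m j * Q i j * c j ^ 2 = 0 := by
    rw [sum_comm]
    refine sum_eq_zero fun j _ => ?_
    rw [← mul_zero (m j * c j ^ 2), ← hker j, mul_sum]
    exact sum_congr rfl fun i _ => by rw [hsym]; ring
  have hexpand : ∀ i j, m i * m j * Q i j * (c i - c j) ^ 2 =
      m i * m j * Q i j * c i ^ 2 + m i * m j * Q i j * c j ^ 2 -
        2 * (c i * m i * (c j * m j) * Q i j) := fun i j => by ring
  simp only [dirichletEnergy, hexpand, sum_sub_distrib, sum_add_distrib, hrow, hcol,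
    ← mul_sum]
  ring

section Ordered

variable {K : Type*} [CommRing K] [LinearOrder K] [IsStrictOrderedRing K] {w : M → M → K}

theorem dirichletEnergy_term_nonneg (hw : ∀ i j, i ≠ j → 0 ≤ w i j) (c : M → K) (i j : M) :
    0 ≤ w i j * (c i - c j) ^ 2 := by
  rcases eq_or_ne i j with rfl | hij
  · simp
  · exact mul_nonneg (hw i j hij) (sq_nonneg _)

theorem dirichletEnergy_nonneg [Fintype M] (hw : ∀ i j, i ≠ j → 0 ≤ w i j) (c : M → K) :
    0 ≤ dirichletEnergy w c :=
  sum_nonneg fun i _ => sum_nonneg fun j _ => dirichletEnergy_term_nonneg hw c i j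

theorem eq_of_dirichletEnergy_eq_zero [Fintype M] (hw : ∀ i j, i ≠ j → 0 ≤ w i j) (c : M → K)
    (h : dirichletEnergy w c = 0) {i j : M} (hij : 0 < w i j) : c i = c j := by
  have hrow := (sum_eq_zero_iff_of_nonneg fun i _ =>
    sum_nonneg fun j _ => dirichletEnergy_term_nonneg hw c i j).1 h i (mem_univ i)
  have hterm := (sum_eq_zero_iff_of_nonneg fun j _ =>
    dirichletEnergy_term_nonneg hw c i j).1 hrow j (mem_univ j)
  have hsq : (c i - c j) ^ 2 = 0 := (mul_eq_zero.1 hterm).resolve_left hij.ne'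
  exact sub_eq_zero.1 (pow_eq_zero_iff two_ne_zero |>.1 hsq)

end Ordered

theorem apply_eq_apply_of_cut_connected [Fintype M] [DecidableEq M] {α : Type*}
    {P : M → M → Prop}
    (hP : ∀ S : Finset M, S.Nonempty → Sᶜ.Nonempty → ∃ i ∈ S, ∃ j ∈ Sᶜ, P i j)
    {c : M → α} (hc : ∀ i j, P i j → c i = c j) (i j : M) : c i = c j := by
  classical
  by_contra hne
  obtain ⟨k, hk, l, hl, hkl⟩ := hP (univ.filter fun k => c k = c i) ⟨i, by simp⟩
    ⟨j, by simpa using Ne.symm hne⟩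
  simp only [mem_compl, mem_filter, mem_univ, true_and] at hk hl
  exact hl ((hc k l hkl).symm.trans hk)

end

/-- Combinatorial core of Zariski's lemma: a symmetric rational matrix (Eᵢ·Eⱼ) with
nonnegative off-diagonal entries, a positive vector (mⱼ) in its kernel
(Σⱼ mⱼ(Eᵢ·Eⱼ) = 0 for all i) and connected dual graph is negative semi-definite,
with radical spanned by (mᵢ): for every rational vector (aᵢ),
Σ aᵢaⱼ(Eᵢ·Eⱼ) ≤ 0 with equality iff (aᵢ) is proportional to (mᵢ). -/
theorem zariski_matrix_lemma {M : Type*} [Fintype M] [DecidableEq M]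
    (Q : M → M → ℚ) (hsym : ∀ i j, Q i j = Q j i)
    (hoff : ∀ i j, i ≠ j → 0 ≤ Q i j)
    (m : M → ℚ) (hm : ∀ j, 0 < m j)
    (hker : ∀ i, ∑ j, m j * Q i j = 0)
    (hconn : ∀ S : Finset M, S.Nonempty → Sᶜ.Nonempty →
      ∃ i ∈ S, ∃ j ∈ Sᶜ, 0 < Q i j) :
    ∀ a : M → ℚ,
      (∑ i, ∑ j, a i * a j * Q i j ≤ 0) ∧
      ((∑ i, ∑ j, a i * a j * Q i j = 0) ↔ ∃ t : ℚ, ∀ i, a i = t * m i) := by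
  intro a
  obtain ⟨c, rfl⟩ : ∃ c : M → ℚ, a = fun i => c i * m i :=
    ⟨fun i => a i / m i, funext fun i => (div_mul_cancel₀ _ (hm i).ne').symm⟩
  dsimp only
  have hw : ∀ i j, i ≠ j → 0 ≤ m i * m j * Q i j := fun i j hij =>
    mul_nonneg (mul_pos (hm i) (hm j)).le (hoff i j hij)
  have key := two_mul_sum_mul_mul_eq_neg_dirichletEnergy hsym hker c
  refine ⟨by linarith [dirichletEnergy_nonneg hw c], fun h0 => ?_, fun ⟨t, ht⟩ => ?_⟩
  · have hconst : ∀ i j, c i = c j := apply_eq_apply_of_cut_connected hconn fun i j hQ =>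
      eq_of_dirichletEnergy_eq_zero hw c (by linarith) (mul_pos (mul_pos (hm i) (hm j)) hQ)
    rcases isEmpty_or_nonempty M with _ | ⟨⟨i₀⟩⟩
    · exact ⟨0, isEmptyElim⟩
    · exact ⟨c i₀, fun i => by rw [hconst i i₀]⟩
  · have hct : ∀ i, c i = t := fun i => mul_right_cancel₀ (hm i).ne' (ht i)
    have hE : dirichletEnergy (fun i j => m i * m j * Q i j) c = 0 := by
      simp [dirichletEnergy, hct]
    linarith
end

section
/- In the degeneration of cubic surfaces X = { t f_3(x,y,z,w) + s·xyz = 0 } ⊂ P^3 × P^1 (f_3 general of degree 3), the relative anticanonical class satisfies DF(X/P^1, -K_X) = -(1/(2(n+1)(-K_{X_t})^n))·(-K_{X/P^1})^{n+1} = 4/9 for n = 2, given that K_X has bidegree (-1,-1) on P^3 × P^1 restricted to X and (-K_{X_t})^2 = 3 for a smooth cubic surface fiber. -/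
open MvPolynomial

/-- DF invariant of the cubic surface degeneration X = {t·f₃ + s·xyz = 0} ⊂ P³×P¹:
with n = 2, (-K_{X_t})² = 3, and -K_{X/P¹} of bidegree (1,-1)... precisely, in the
Chow ring ℚ[H₁,H₂]/(H₁⁴,H₂²) of P³×P¹ the intersection number d with
(H₁-H₂)³(3H₁+H₂) = d·H₁³H₂ computes (-K_{X/P¹})³, and
DF(X/P¹, -K_X) = -(1/(2(n+1)(-K_{X_t})ⁿ))·(-K_{X/P¹})^{n+1} = -d/(2·3·3) = 4/9. -/
theorem DF_cubic_surface_family (d : ℚ)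
    (hd : Ideal.Quotient.mk
        (Ideal.span {(X 0 : MvPolynomial (Fin 2) ℚ) ^ 4, (X 1 : MvPolynomial (Fin 2) ℚ) ^ 2})
        ((X 0 - X 1) ^ 3 * (3 * X 0 + X 1))
      = Ideal.Quotient.mk
        (Ideal.span {(X 0 : MvPolynomial (Fin 2) ℚ) ^ 4, (X 1 : MvPolynomial (Fin 2) ℚ) ^ 2})
        (C d * ((X 0) ^ 3 * X 1))) :
    -(1 / (2 * ((2 : ℚ) + 1) * 3)) * d = 4 / 9 := by
  have hmem := Ideal.Quotient.eq.mp hd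
  obtain ⟨a, b, hab⟩ := Ideal.mem_span_pair.mp hmem
  set m : Fin 2 →₀ ℕ := Finsupp.single 0 3 + Finsupp.single 1 1 with hm
  have hc := congrArg (coeff m) hab
  have hexp : ((X 0 - X 1) ^ 3 * (3 * X 0 + X 1) - C d * ((X 0:MvPolynomial (Fin 2) ℚ) ^ 3 * X 1))
      = C (3:ℚ) * X 0 ^ 4 + C (-8 - d) * (X 0 ^ 3 * X 1) + C (6:ℚ) * (X 0 ^ 2 * X 1 ^ 2)
        - X 1 ^ 4 := by
    simp only [map_sub, map_neg, map_ofNat]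
    ring
  rw [hexp] at hc
  have h1 : coeff m (a * (X 0:MvPolynomial (Fin 2) ℚ) ^ 4) = 0 := by
    rw [X_pow_eq_monomial, coeff_mul_monomial', if_neg]
    simp [hm, Finsupp.single_le_iff]
  have h2 : coeff m (b * (X 1:MvPolynomial (Fin 2) ℚ) ^ 2) = 0 := by
    rw [X_pow_eq_monomial, coeff_mul_monomial', if_neg]
    simp [hm, Finsupp.single_le_iff]
  rw [coeff_add, h1, h2] at hc
  have hX : (X 1 : MvPolynomial (Fin 2) ℚ) = monomial (Finsupp.single 1 1) 1 := by
    rw [← X_pow_eq_monomial, pow_one]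
  simp only [coeff_sub, coeff_add, hX, X_pow_eq_monomial, monomial_mul, monomial_pow,
    C_mul_monomial, one_mul, mul_one, one_pow, coeff_monomial, hm] at hc
  norm_num [Finsupp.ext_iff, Fin.forall_fin_two] at hc
  linarith
end
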